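/- Let K ≥ 1 and let a class hierarchy over the K classes be given by a finite index type J, a map v : J → Finset (Fin K) with v j nonempty for every j, and weights w : J → ℝ with 0 ≤ w j. Let π be a strictly positive probability vector on Fin K and let k ≠ k' be two classes. Then the function g : ℝ → ℝ defined by g(t) = ∑_{y} π y · ℓ(π + t·(e_k − e_{k'}), y), where e_k is the k-th standard basis vector and ℓ is the hierarchical loss, has derivative at t = 0 equal to ∑_{j : k' ∈ v j} w j − ∑_{j : k ∈ v j} w j. In particular, the gradient of the expected hierarchical loss along the probability simplex vanishes at the true distribution π if and only if the ancestor weight sums ∑_{j : k ∈ v j} w j are equal for all classes k. -/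

import Mathlib

/-! Exchanging the sums over classes and nodes turns the expected loss into
`-∑ j, w j * S j * log (S j + t * c j)` with `S j = ∑ l ∈ v j, π l` and
`c j = [k ∈ v j] - [k' ∈ v j]`. The derivative of `S * log (S + t * c)` at `0` is `c`:
the mass `S j` of a node cancels against the `1 / S j` from the logarithm, which is why only
the ancestor weight sums of `k` and `k'` survive. -/

open Finset

theorem Finset.sum_mul_sum_filter_mem {α β R : Type*} [Fintype α] [Fintype β] [DecidableEq α]
    [CommSemiring R] (p : α → R) (v : β → Finset α) (f : β → R) :
    ∑ y, p y * ∑ j ∈ univ.filter (fun j => y ∈ v j), f j = ∑ j, (∑ l ∈ v j, p l) * f j := by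
  simp_rw [sum_filter, mul_sum, sum_mul]
  rw [sum_comm]
  refine sum_congr rfl fun j _ => ?_
  simp_rw [mul_ite, mul_zero]
  rw [sum_ite_mem, univ_inter]

theorem Finset.sum_add_mul_ite_sub_ite {α R : Type*} [DecidableEq α] [CommRing R]
    (s : Finset α) (p : α → R) (t : R) (k k' : α) :
    ∑ l ∈ s, (p l + t * ((if l = k then (1 : R) else 0) - (if l = k' then (1 : R) else 0))) =
      ∑ l ∈ s, p l + t * ((if k ∈ s then 1 else 0) - (if k' ∈ s then 1 else 0)) := by
  rw [sum_add_distrib, ← mul_sum, sum_sub_distrib, sum_ite_eq', sum_ite_eq']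

theorem hasDerivAt_mul_log_add_mul {a : ℝ} (ha : a ≠ 0) (c : ℝ) :
    HasDerivAt (fun t => a * Real.log (a + t * c)) c 0 := by
  have hlin : HasDerivAt (fun t => a + t * c) c 0 := by
    simpa using ((hasDerivAt_id (0 : ℝ)).mul_const c).const_add a
  exact ((hlin.log (by simpa using ha)).const_mul a).congr_deriv (by simp [mul_div_cancel₀ c ha])

theorem expected_hierarchical_loss_deriv_along_simplex_general
    {K : ℕ} {J : Type*} [Fintype J]
    (v : J → Finset (Fin K)) (hne : ∀ j, (v j).Nonempty)
    (w : J → ℝ)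
    (π : Fin K → ℝ) (hπ0 : ∀ k, 0 < π k)
    (k k' : Fin K) :
    HasDerivAt
      (fun t : ℝ => ∑ y, π y *
        (-(∑ j ∈ Finset.univ.filter (fun j => y ∈ v j),
          w j * Real.log (∑ l ∈ v j,
            (π l + t * ((if l = k then (1 : ℝ) else 0)
              - (if l = k' then (1 : ℝ) else 0)))))))
      ((∑ j ∈ Finset.univ.filter (fun j => k' ∈ v j), w j)
        - ∑ j ∈ Finset.univ.filter (fun j => k ∈ v j), w j)
      0 := by
  set S : J → ℝ := fun j => ∑ l ∈ v j, π l
  set c : J → ℝ := fun j => (if k ∈ v j then 1 else 0) - (if k' ∈ v j then 1 else 0)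
  have hS : ∀ j, S j ≠ 0 := fun j => (sum_pos (fun l _ => hπ0 l) (hne j)).ne'
  have hloss : HasDerivAt (fun t => -∑ j, w j * (S j * Real.log (S j + t * c j)))
      (-∑ j, w j * c j) 0 :=
    (HasDerivAt.fun_sum fun j _ => (hasDerivAt_mul_log_add_mul (hS j) (c j)).const_mul (w j)).neg
  convert hloss using 1
  · funext t
    simp only [mul_neg, sum_neg_distrib, sum_add_mul_ite_sub_ite, sum_mul_sum_filter_mem]
    exact congrArg Neg.neg (sum_congr rfl fun j _ => mul_left_comm _ _ _)
  · simp only [c, mul_sub, mul_ite, mul_one, mul_zero, sum_sub_distrib, ← sum_filter]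
    ring

/-- The derivative of the expected hierarchical loss at the true distribution `π`, along
the simplex direction `e k - e k'`, equals the difference of ancestor weight sums
`∑_{j : k' ∈ v j} w j - ∑_{j : k ∈ v j} w j`. -/
theorem expected_hierarchical_loss_deriv_along_simplex
    {K : ℕ} (hK : 1 ≤ K) {J : Type*} [Fintype J]
    (v : J → Finset (Fin K)) (hne : ∀ j, (v j).Nonempty)
    (w : J → ℝ) (hw : ∀ j, 0 ≤ w j)
    (π : Fin K → ℝ) (hπ0 : ∀ k, 0 < π k) (hπ1 : ∑ k, π k = 1)
    (k k' : Fin K) (hkk' : k ≠ k') :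
    HasDerivAt
      (fun t : ℝ => ∑ y, π y *
        (-(∑ j ∈ Finset.univ.filter (fun j => y ∈ v j),
          w j * Real.log (∑ l ∈ v j,
            (π l + t * ((if l = k then (1 : ℝ) else 0)
              - (if l = k' then (1 : ℝ) else 0)))))))
      ((∑ j ∈ Finset.univ.filter (fun j => k' ∈ v j), w j)
        - ∑ j ∈ Finset.univ.filter (fun j => k ∈ v j), w j)
      0 :=
  expected_hierarchical_loss_deriv_along_simplex_general v hne w π hπ0 k k'
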